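/- arXiv:math/0411325 — 4 statements merged into one kernel-verified Lean document; each statement's English description precedes it below -/
import Mathlib

section
/- Let p, q be holomorphic on Ω \ {z₀} (Ω ⊂ ℂ a bounded domain with analytic boundary curves C₁,…,C_n) such that Re p is constant on each C_k and Im q is constant on each C_k. Then for each boundary curve C_k, Re ∮_{C_k} (p dq − q dp) = 0. -/
/-!
Write `P = p ∘ γ`, `Q = q ∘ γ`. Since `Re P ≡ c₁` and `Im Q ≡ c₂`, the derivatives satisfy
`Re P' = 0` and `Im Q' = 0`, and then `Re (P Q' - Q P') = c₁ (Re Q)' + c₂ (Im P)'` is the derivative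
of a periodic function, so its integral over a period vanishes.
-/

open Set Complex intervalIntegral

theorem ContinuousLinearMap.map_eq_zero_of_hasDerivAt_of_forall_eq {𝕜 E F : Type*}
    [NontriviallyNormedField 𝕜] [NormedAddCommGroup E] [NormedSpace 𝕜 E]
    [NormedAddCommGroup F] [NormedSpace 𝕜 F] (L : E →L[𝕜] F) {f : 𝕜 → E} {f' : E} {t : 𝕜}
    {c : F} (hc : ∀ s, L (f s) = c) (hf : HasDerivAt f f' t) : L f' = 0 := by
  have hLf : HasDerivAt (L ∘ f) (L f') t := L.hasFDerivAt.comp_hasDerivAt t hf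
  rw [show L ∘ f = fun _ => c from funext hc] at hLf
  exact hLf.unique (hasDerivAt_const t c)

theorem Complex.re_mul_sub_mul_of_re_eq_zero_of_im_eq_zero {z w z' w' : ℂ}
    (hz' : z'.re = 0) (hw' : w'.im = 0) :
    (z * w' - w * z').re = z.re * w'.re + w.im * z'.im := by
  simp only [sub_re, mul_re, hz', hw']
  ring

theorem Complex.re_integral_mul_deriv_sub_mul_deriv_eq_zero {f g f' g' : ℝ → ℂ} {a b c₁ c₂ : ℝ}
    (hf : ∀ t ∈ uIcc a b, HasDerivAt f (f' t) t) (hg : ∀ t ∈ uIcc a b, HasDerivAt g (g' t) t)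
    (hre : ∀ t, (f t).re = c₁) (him : ∀ t, (g t).im = c₂) (hfab : f a = f b) (hgab : g a = g b)
    (hint : IntervalIntegrable (fun t => f t * g' t - g t * f' t) MeasureTheory.volume a b) :
    (∫ t in a..b, f t * g' t - g t * f' t).re = 0 := by
  have hF : ∀ t ∈ uIcc a b, HasDerivAt (fun s => c₁ * (g s).re + c₂ * (f s).im)
      (f t * g' t - g t * f' t).re t := by
    intro t ht
    have hf're : (f' t).re = 0 := reCLM.map_eq_zero_of_hasDerivAt_of_forall_eq hre (hf t ht)
    have hg'im : (g' t).im = 0 := imCLM.map_eq_zero_of_hasDerivAt_of_forall_eq him (hg t ht)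
    rw [re_mul_sub_mul_of_re_eq_zero_of_im_eq_zero hf're hg'im, hre, him]
    exact ((reCLM.hasFDerivAt.comp_hasDerivAt t (hg t ht)).const_mul c₁).add
      ((imCLM.hasFDerivAt.comp_hasDerivAt t (hf t ht)).const_mul c₂)
  rw [← reCLM_apply, ← reCLM.intervalIntegral_comp_comm hint]
  simp only [reCLM_apply]
  rw [integral_eq_sub_of_hasDerivAt hF ⟨hint.1.re, hint.2.re⟩, hfab, hgab, sub_self]

theorem DifferentiableOn.continuous_deriv_comp {h : ℂ → ℂ} {U : Set ℂ} (hU : IsOpen U)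
    (hh : DifferentiableOn ℂ h U) {γ : ℝ → ℂ} (hγ : Continuous γ) (hγU : ∀ t, γ t ∈ U) :
    Continuous fun t => _root_.deriv h (γ t) :=
  (hh.deriv hU).continuousOn.comp_continuous hγ hγU

theorem stmt8_general (U : Set ℂ) (hU : IsOpen U)
    -- an analytic closed boundary curve contained in `U`
    (γ : ℝ → ℂ)
    (hγa : ∀ t, AnalyticAt ℝ γ t)
    (hγp : Function.Periodic γ (2 * Real.pi))
    (hγU : Set.range γ ⊆ U)
    (p q : ℂ → ℂ)
    (hp : DifferentiableOn ℂ p U) (hq : DifferentiableOn ℂ q U)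
    (c₁ c₂ : ℝ)
    (hre : ∀ t, (p (γ t)).re = c₁)
    (him : ∀ t, (q (γ t)).im = c₂) :
    (∫ t in (0:ℝ)..(2 * Real.pi),
      (p (γ t) * deriv q (γ t) - q (γ t) * deriv p (γ t)) * deriv γ t).re = 0 := by
  have hγU' : ∀ t, γ t ∈ U := fun t => hγU (mem_range_self t)
  have hγc : Continuous γ := continuous_iff_continuousAt.2 fun t => (hγa t).continuousAt
  have hγ'c : Continuous (deriv γ) :=
    continuous_iff_continuousAt.2 fun t => (hγa t).deriv.continuousAt
  have hcomp : ∀ {h : ℂ → ℂ}, DifferentiableOn ℂ h U →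
      ∀ t, HasDerivAt (h ∘ γ) (deriv h (γ t) * deriv γ t) t := fun hh t =>
    (hh.differentiableAt (hU.mem_nhds (hγU' t))).hasDerivAt.comp t
      (hγa t).differentiableAt.hasDerivAt
  have hpc : Continuous (p ∘ γ) := continuous_iff_continuousAt.2 fun t => (hcomp hp t).continuousAt
  have hqc : Continuous (q ∘ γ) := continuous_iff_continuousAt.2 fun t => (hcomp hq t).continuousAt
  have hint := ((hpc.mul ((hq.continuous_deriv_comp hU hγc hγU').mul hγ'c)).sub
    (hqc.mul ((hp.continuous_deriv_comp hU hγc hγU').mul hγ'c))).intervalIntegrable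
    (μ := MeasureTheory.volume) 0 (2 * Real.pi)
  have hclosed : γ 0 = γ (2 * Real.pi) := by simpa using (hγp 0).symm
  have key := re_integral_mul_deriv_sub_mul_deriv_eq_zero (fun t _ => hcomp hp t)
    (fun t _ => hcomp hq t) hre him (congrArg p hclosed) (congrArg q hclosed) hint
  simpa only [Function.comp_apply, sub_mul, mul_assoc, mul_comm (deriv q _)] using key

theorem stmt8 (U : Set ℂ) (hU : IsOpen U)
    -- an analytic closed boundary curve contained in `U`
    (γ : ℝ → ℂ)
    (hγa : ∀ t, AnalyticAt ℝ γ t)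
    (hγp : Function.Periodic γ (2 * Real.pi))
    (hγi : Set.InjOn γ (Set.Ico 0 (2 * Real.pi)))
    (hγd : ∀ t, deriv γ t ≠ 0)
    (hγU : Set.range γ ⊆ U)
    (p q : ℂ → ℂ)
    (hp : DifferentiableOn ℂ p U) (hq : DifferentiableOn ℂ q U)
    (c₁ c₂ : ℝ)
    (hre : ∀ t, (p (γ t)).re = c₁)
    (him : ∀ t, (q (γ t)).im = c₂) :
    (∫ t in (0:ℝ)..(2 * Real.pi),
      (p (γ t) * deriv q (γ t) - q (γ t) * deriv p (γ t)) * deriv γ t).re = 0 :=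
  stmt8_general U hU γ hγa hγp hγU p q hp hq c₁ c₂ hre him
end

section
/- Let 0 < r < 1, z₀ ∈ 𝔸_r = {z : r < |z| < 1}, and set p(z) = z ϑ₁'(conj(z₀) z)/ϑ₁(conj(z₀) z) − ϑ₁'(z₀/z)/(z ϑ₁(z₀/z)). Then p satisfies the reflection identity p(1/conj(z)) + conj(p(z)) = 0 for all z in its domain; in particular Re p(z) = 0 whenever |z| = 1. -/
open Set Complex

/-- The constant `C = ∏_{k=1}^∞ (1 − r^{2k})`. -/
noncomputable def thetaConst (r : ℝ) : ℂ := ∏' k : ℕ, (1 - (r : ℂ) ^ (2 * (k + 1)))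

/-- The annular Jacobi theta function
`ϑ₁(z) = C (1 − 1/z) ∏_{k=1}^∞ (1 − r^{2k} z)(1 − r^{2k}/z)`. -/
noncomputable def theta1 (r : ℝ) (z : ℂ) : ℂ :=
  thetaConst r * (1 - 1 / z) *
    ∏' k : ℕ, ((1 - (r : ℂ) ^ (2 * (k + 1)) * z) * (1 - (r : ℂ) ^ (2 * (k + 1)) / z))

/-- `p(z) = z ϑ₁'(z̄₀ z)/ϑ₁(z̄₀ z) − ϑ₁'(z₀/z)/(z ϑ₁(z₀/z))`. -/
noncomputable def pfun (r : ℝ) (z₀ z : ℂ) : ℂ :=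
  z * deriv (theta1 r) ((starRingEnd ℂ) z₀ * z) / theta1 r ((starRingEnd ℂ) z₀ * z)
    - deriv (theta1 r) (z₀ / z) / (z * theta1 r (z₀ / z))

/-! The product defining `ϑ₁` has real coefficients, so `ϑ₁(z̄) = conj ϑ₁(z)`, and hence also
`ϑ₁'(z̄) = conj ϑ₁'(z)`. Replacing `z` by `1/z̄` in `p` swaps its two terms up to conjugation, and
the identity is then field arithmetic. -/

open ComplexConjugate

lemma conj_tprod {ι : Type*} (f : ι → ℂ) : conj (∏' i, f i) = ∏' i, conj (f i) :=
  Function.LeftInverse.map_tprod f continuous_conj continuous_conj conj_conj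

lemma deriv_conj_of_comm_conj {f : ℂ → ℂ} (hf : ∀ z, f (conj z) = conj (f z)) (z : ℂ) :
    deriv f (conj z) = conj (deriv f z) := by
  have hself : conj ∘ f ∘ conj = f := funext fun w => by simp [hf]
  simpa [hself] using congrFun (deriv_conj_conj (f := f)) (conj z)

lemma theta1_conj (r : ℝ) (z : ℂ) : theta1 r (conj z) = conj (theta1 r z) := by
  simp only [theta1, thetaConst, map_mul, map_sub, map_one, map_div₀, conj_tprod, map_pow,
    conj_ofReal]

lemma deriv_theta1_conj (r : ℝ) (z : ℂ) :
    deriv (theta1 r) (conj z) = conj (deriv (theta1 r) z) :=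
  deriv_conj_of_comm_conj (theta1_conj r) z

/-- With the convention `0⁻¹ = 0` this is an identity for every `z`, since `(a * b)⁻¹ = a⁻¹ * b⁻¹`
holds in every field. -/
lemma pfun_one_div_conj_add_conj (r : ℝ) (z₀ z : ℂ) :
    pfun r z₀ (1 / conj z) + conj (pfun r z₀ z) = 0 := by
  have e₁ : conj z₀ * (1 / conj z) = conj (z₀ / z) := by rw [map_div₀]; ring
  have e₂ : z₀ / (1 / conj z) = conj (conj z₀ * z) := by
    rw [map_mul, conj_conj, div_div_eq_mul_div, div_one, mul_comm]
  rw [pfun, pfun, e₁, e₂, theta1_conj, theta1_conj, deriv_theta1_conj, deriv_theta1_conj]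
  simp only [div_eq_mul_inv, one_mul, mul_inv, inv_inv, map_sub, map_mul, map_inv₀]
  ring

lemma one_div_conj_of_norm_eq_one {z : ℂ} (hz : ‖z‖ = 1) : 1 / conj z = z := by
  rw [← inv_eq_conj hz, one_div, inv_inv]

theorem stmt13_general (r : ℝ) (z₀ : ℂ) :
    (∀ z : ℂ, z ≠ 0 →
      theta1 r ((starRingEnd ℂ) z₀ * z) ≠ 0 → theta1 r (z₀ / z) ≠ 0 →
      theta1 r ((starRingEnd ℂ) z₀ * (1 / (starRingEnd ℂ) z)) ≠ 0 →
      theta1 r (z₀ / (1 / (starRingEnd ℂ) z)) ≠ 0 →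
      pfun r z₀ (1 / (starRingEnd ℂ) z) + (starRingEnd ℂ) (pfun r z₀ z) = 0) ∧
    ∀ z : ℂ, ‖z‖ = 1 →
      theta1 r ((starRingEnd ℂ) z₀ * z) ≠ 0 → theta1 r (z₀ / z) ≠ 0 →
      (pfun r z₀ z).re = 0 := by
  refine ⟨fun z _ _ _ _ _ => pfun_one_div_conj_add_conj r z₀ z, fun z hz _ _ => ?_⟩
  have h := pfun_one_div_conj_add_conj r z₀ z
  rw [one_div_conj_of_norm_eq_one hz, add_conj] at h
  have h' : 2 * (pfun r z₀ z).re = 0 := by exact_mod_cast h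
  linarith

theorem stmt13 (r : ℝ) (hr0 : 0 < r) (hr1 : r < 1)
    (z₀ : ℂ) (hz₀l : r < ‖z₀‖) (hz₀u : ‖z₀‖ < 1) :
    (∀ z : ℂ, z ≠ 0 →
      theta1 r ((starRingEnd ℂ) z₀ * z) ≠ 0 → theta1 r (z₀ / z) ≠ 0 →
      theta1 r ((starRingEnd ℂ) z₀ * (1 / (starRingEnd ℂ) z)) ≠ 0 →
      theta1 r (z₀ / (1 / (starRingEnd ℂ) z)) ≠ 0 →
      pfun r z₀ (1 / (starRingEnd ℂ) z) + (starRingEnd ℂ) (pfun r z₀ z) = 0) ∧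
    ∀ z : ℂ, ‖z‖ = 1 →
      theta1 r ((starRingEnd ℂ) z₀ * z) ≠ 0 → theta1 r (z₀ / z) ≠ 0 →
      (pfun r z₀ z).re = 0 :=
  stmt13_general r z₀
end

section
/- Let z₀ ∈ 𝔸_r with 0 < r < 1. The function p(z) = z ϑ₁'(conj(z₀) z)/ϑ₁(conj(z₀) z) − ϑ₁'(z₀/z)/(z ϑ₁(z₀/z)) is holomorphic on 𝔸_r \ {z₀} and has a simple pole at z₀ with residue 1. -/
/-!
Off its zero at `1`, `ϑ₁(w) = (w - 1) h(w)` where `h(w) = C ∏ (1 - r^{2k} w)(1 - r^{2k}/w) / w` is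
holomorphic and zero-free on `r² < |w| < r⁻²`, the product converging locally uniformly there. Hence
`ϑ₁'/ϑ₁ = 1/(w - 1) + h'/h`. For `z` in the annulus, `z̄₀ z` stays in `r² < |w| < 1`, where `ϑ₁` has
no zero, while `z₀/z` stays in `r < |w| < r⁻¹` and equals `1` only at `z = z₀`; there
`1/(z (z₀/z - 1)) = -1/(z - z₀)` produces the pole with residue `1`.
-/

open Set Complex

theorem differentiableOn_tprod_one_add {ι : Type*} {f : ι → ℂ → ℂ} {U : Set ℂ} {u : ι → ℝ}
    (hU : IsOpen U) (hu : Summable u) (hfu : ∀ i, ∀ z ∈ U, ‖f i z‖ ≤ u i)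
    (hf : ∀ i, DifferentiableOn ℂ (f i) U) :
    DifferentiableOn ℂ (fun z => ∏' i, (1 + f i z)) U :=
  (hu.hasProdLocallyUniformlyOn_one_add hU (.of_forall hfu)
    fun i => (hf i).continuousOn).differentiableOn
    (.of_forall fun _ => DifferentiableOn.fun_finsetProd fun i _ => (hf i).const_add 1) hU

theorem DifferentiableOn.differentiableAt_logDeriv {f : ℂ → ℂ} {U : Set ℂ} {x : ℂ}
    (hf : DifferentiableOn ℂ f U) (hU : IsOpen U) (hx : x ∈ U) (hfx : f x ≠ 0) :
    DifferentiableAt ℂ (logDeriv f) x :=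
  ((hf.deriv hU).differentiableAt (hU.mem_nhds hx)).div
    (hf.differentiableAt (hU.mem_nhds hx)) hfx

theorem norm_one_sub_mul_one_sub_sub_one_le {x y : ℂ} {t : ℝ} (hx : ‖x‖ ≤ t) (hy : ‖y‖ ≤ t)
    (ht : t ≤ 1) : ‖(1 - x) * (1 - y) - 1‖ ≤ 3 * t := by
  have hxy : ‖x * y‖ ≤ t := by
    rw [norm_mul]
    nlinarith [norm_nonneg x, norm_nonneg y]
  calc ‖(1 - x) * (1 - y) - 1‖ = ‖x * y - x - y‖ := by ring_nf
    _ ≤ ‖x * y - x‖ + ‖y‖ := norm_sub_le _ _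
    _ ≤ ‖x * y‖ + ‖x‖ + ‖y‖ := by gcongr; exact norm_sub_le _ _
    _ ≤ 3 * t := by linarith

def annulus (a b : ℝ) : Set ℂ := {z | a < ‖z‖ ∧ ‖z‖ < b}

theorem mem_annulus {a b : ℝ} {z : ℂ} : z ∈ annulus a b ↔ a < ‖z‖ ∧ ‖z‖ < b := Iff.rfl

theorem isOpen_annulus (a b : ℝ) : IsOpen (annulus a b) :=
  isOpen_Ioo.preimage continuous_norm

theorem annulus_subset_annulus {a a' b b' : ℝ} (ha : a' ≤ a) (hb : b ≤ b') :
    annulus a b ⊆ annulus a' b' :=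
  fun _ hz => ⟨ha.trans_lt hz.1, hz.2.trans_le hb⟩

theorem ne_zero_of_mem_annulus {a b : ℝ} {z : ℂ} (ha : 0 ≤ a) (hz : z ∈ annulus a b) : z ≠ 0 :=
  norm_pos_iff.mp (ha.trans_lt hz.1)

theorem ne_one_of_norm_lt_one {z : ℂ} (hz : ‖z‖ < 1) : z ≠ 1 := by
  rintro rfl
  exact hz.ne norm_one

theorem norm_ofReal_pow_two_mul_succ (r : ℝ) (k : ℕ) :
    ‖(r : ℂ) ^ (2 * (k + 1))‖ = (r ^ 2) ^ k * r ^ 2 := by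
  rw [norm_pow, norm_real, Real.norm_eq_abs, pow_mul, sq_abs, pow_succ]

theorem summable_sq_pow {r : ℝ} (hr0 : 0 < r) (hr1 : r < 1) : Summable fun k : ℕ => (r ^ 2) ^ k :=
  summable_geometric_of_lt_one (sq_nonneg r) (pow_lt_one₀ hr0.le hr1 two_ne_zero)

theorem thetaConst_ne_zero {r : ℝ} (hr0 : 0 < r) (hr1 : r < 1) : thetaConst r ≠ 0 := by
  have hq : ∀ k : ℕ, ‖-(r : ℂ) ^ (2 * (k + 1))‖ = (r ^ 2) ^ k * r ^ 2 := fun k => by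
    rw [norm_neg, norm_ofReal_pow_two_mul_succ]
  refine tprod_one_add_ne_zero_of_summable (f := fun k : ℕ => -(r : ℂ) ^ (2 * (k + 1)))
    (fun k h => ?_) ?_
  · have := congrArg norm (neg_eq_of_add_eq_zero_right h)
    rw [hq, norm_neg, norm_one, ← pow_succ] at this
    exact (pow_lt_one₀ (sq_nonneg r) (pow_lt_one₀ hr0.le hr1 two_ne_zero)
      k.succ_ne_zero).ne this.symm
  · simpa only [hq] using (summable_sq_pow hr0 hr1).mul_right (r ^ 2)

noncomputable def theta1Prod (r : ℝ) (z : ℂ) : ℂ :=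
  ∏' k : ℕ, ((1 - (r : ℂ) ^ (2 * (k + 1)) * z) * (1 - (r : ℂ) ^ (2 * (k + 1)) / z))

theorem norm_pow_mul_lt_of_mem_annulus {r : ℝ} (hr : 0 < r) {z : ℂ}
    (hz : z ∈ annulus (r ^ 2) (r ^ 2)⁻¹) (k : ℕ) :
    ‖(r : ℂ) ^ (2 * (k + 1)) * z‖ < (r ^ 2) ^ k ∧ ‖(r : ℂ) ^ (2 * (k + 1)) / z‖ < (r ^ 2) ^ k := by
  have hr2 : 0 < r ^ 2 := by positivity
  have hk : 0 < (r ^ 2) ^ k := by positivity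
  have hz0 : 0 < ‖z‖ := hr2.trans hz.1
  rw [norm_mul, norm_div, norm_ofReal_pow_two_mul_succ, mul_assoc, mul_div_assoc]
  have hmul : r ^ 2 * ‖z‖ < 1 :=
    (mul_lt_mul_of_pos_left hz.2 hr2).trans_eq (mul_inv_cancel₀ hr2.ne')
  exact ⟨mul_lt_of_lt_one_right hk hmul, mul_lt_of_lt_one_right hk ((div_lt_one hz0).2 hz.1)⟩

theorem norm_theta1Prod_factor_sub_one_le {r : ℝ} (hr0 : 0 < r) (hr1 : r < 1) {z : ℂ}
    (hz : z ∈ annulus (r ^ 2) (r ^ 2)⁻¹) (k : ℕ) :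
    ‖(1 - (r : ℂ) ^ (2 * (k + 1)) * z) * (1 - (r : ℂ) ^ (2 * (k + 1)) / z) - 1‖ ≤
      3 * (r ^ 2) ^ k :=
  have h := norm_pow_mul_lt_of_mem_annulus hr0 hz k
  norm_one_sub_mul_one_sub_sub_one_le h.1.le h.2.le
    (pow_le_one₀ (sq_nonneg r) (pow_le_one₀ hr0.le hr1.le))

theorem differentiableOn_theta1Prod {r : ℝ} (hr0 : 0 < r) (hr1 : r < 1) :
    DifferentiableOn ℂ (theta1Prod r) (annulus (r ^ 2) (r ^ 2)⁻¹) := by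
  refine (differentiableOn_tprod_one_add (isOpen_annulus _ _)
    ((summable_sq_pow hr0 hr1).mul_left 3)
    (fun k z hz => norm_theta1Prod_factor_sub_one_le hr0 hr1 hz k) fun k => ?_).congr
    fun z _ => by simp only [theta1Prod, add_sub_cancel]
  have h0 : ∀ z ∈ annulus (r ^ 2) (r ^ 2)⁻¹, z ≠ 0 := fun z hz =>
    ne_zero_of_mem_annulus (sq_nonneg r) hz
  fun_prop (disch := assumption)

theorem theta1Prod_ne_zero {r : ℝ} (hr0 : 0 < r) (hr1 : r < 1) {z : ℂ}
    (hz : z ∈ annulus (r ^ 2) (r ^ 2)⁻¹) : theta1Prod r z ≠ 0 := by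
  have hfactor (k : ℕ) :
      (1 - (r : ℂ) ^ (2 * (k + 1)) * z) * (1 - (r : ℂ) ^ (2 * (k + 1)) / z) ≠ 0 := by
    have h := norm_pow_mul_lt_of_mem_annulus hr0 hz k
    have hk : (r ^ 2) ^ k ≤ 1 := pow_le_one₀ (sq_nonneg r) (pow_le_one₀ hr0.le hr1.le)
    exact mul_ne_zero (sub_ne_zero.2 (ne_one_of_norm_lt_one (h.1.trans_le hk)).symm)
      (sub_ne_zero.2 (ne_one_of_norm_lt_one (h.2.trans_le hk)).symm)
  simpa only [theta1Prod, add_sub_cancel] using tprod_one_add_ne_zero_of_summable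
    (fun k => by simpa only [add_sub_cancel] using hfactor k)
    (((summable_sq_pow hr0 hr1).mul_left 3).of_nonneg_of_le (fun _ => norm_nonneg _)
      (norm_theta1Prod_factor_sub_one_le hr0 hr1 hz))

noncomputable def theta1Reg (r : ℝ) (z : ℂ) : ℂ := thetaConst r * theta1Prod r z / z

theorem theta1_eq_sub_one_mul_theta1Reg (r : ℝ) {z : ℂ} (hz : z ≠ 0) :
    theta1 r z = (z - 1) * theta1Reg r z := by
  unfold theta1 theta1Reg theta1Prod
  field_simp

theorem differentiableOn_theta1Reg {r : ℝ} (hr0 : 0 < r) (hr1 : r < 1) :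
    DifferentiableOn ℂ (theta1Reg r) (annulus (r ^ 2) (r ^ 2)⁻¹) :=
  ((differentiableOn_theta1Prod hr0 hr1).const_mul _).div differentiableOn_id
    fun _ hz => ne_zero_of_mem_annulus (sq_nonneg r) hz

theorem theta1Reg_ne_zero {r : ℝ} (hr0 : 0 < r) (hr1 : r < 1) {z : ℂ}
    (hz : z ∈ annulus (r ^ 2) (r ^ 2)⁻¹) : theta1Reg r z ≠ 0 :=
  div_ne_zero (mul_ne_zero (thetaConst_ne_zero hr0 hr1) (theta1Prod_ne_zero hr0 hr1 hz))
    (ne_zero_of_mem_annulus (sq_nonneg r) hz)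

theorem differentiableOn_theta1 {r : ℝ} (hr0 : 0 < r) (hr1 : r < 1) :
    DifferentiableOn ℂ (theta1 r) (annulus (r ^ 2) (r ^ 2)⁻¹) :=
  ((differentiableOn_id.sub_const 1).mul (differentiableOn_theta1Reg hr0 hr1)).congr
    fun _ hz => theta1_eq_sub_one_mul_theta1Reg r (ne_zero_of_mem_annulus (sq_nonneg r) hz)

theorem theta1_ne_zero {r : ℝ} (hr0 : 0 < r) (hr1 : r < 1) {z : ℂ}
    (hz : z ∈ annulus (r ^ 2) (r ^ 2)⁻¹) (hz1 : z ≠ 1) : theta1 r z ≠ 0 := by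
  rw [theta1_eq_sub_one_mul_theta1Reg r (ne_zero_of_mem_annulus (sq_nonneg r) hz)]
  exact mul_ne_zero (sub_ne_zero.2 hz1) (theta1Reg_ne_zero hr0 hr1 hz)

theorem logDeriv_theta1 {r : ℝ} (hr0 : 0 < r) (hr1 : r < 1) {z : ℂ}
    (hz : z ∈ annulus (r ^ 2) (r ^ 2)⁻¹) (hz1 : z ≠ 1) :
    logDeriv (theta1 r) z = (z - 1)⁻¹ + logDeriv (theta1Reg r) z := by
  have hA := isOpen_annulus (r ^ 2) (r ^ 2)⁻¹
  have heq : theta1 r =ᶠ[nhds z] fun w => (w - 1) * theta1Reg r w := by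
    filter_upwards [hA.mem_nhds hz] with w hw
    exact theta1_eq_sub_one_mul_theta1Reg r (ne_zero_of_mem_annulus (sq_nonneg r) hw)
  rw [(logDeriv_congr_nhds heq).eq_of_nhds, logDeriv_mul (f := (· - 1)) z (sub_ne_zero.2 hz1)
    (theta1Reg_ne_zero hr0 hr1 hz) (by fun_prop)
    ((differentiableOn_theta1Reg hr0 hr1).differentiableAt (hA.mem_nhds hz))]
  simp [logDeriv_apply]

theorem conj_mul_mem_annulus_and_ne_one {r : ℝ} (hr0 : 0 < r) (hr1 : r < 1) {z₀ z : ℂ}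
    (hz₀ : z₀ ∈ annulus r 1) (hz : z ∈ annulus r 1) :
    starRingEnd ℂ z₀ * z ∈ annulus (r ^ 2) (r ^ 2)⁻¹ ∧ starRingEnd ℂ z₀ * z ≠ 1 := by
  have hlt : ‖starRingEnd ℂ z₀ * z‖ < 1 := by
    rw [norm_mul, RCLike.norm_conj]
    exact mul_lt_one_of_nonneg_of_lt_one_left (norm_nonneg _) hz₀.2 hz.2.le
  refine ⟨⟨?_, hlt.trans_le (one_le_inv₀ (by positivity) |>.2 ?_)⟩, ne_one_of_norm_lt_one hlt⟩
  · rw [norm_mul, RCLike.norm_conj, sq]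
    exact mul_lt_mul'' hz₀.1 hz.1 hr0.le hr0.le
  · exact pow_le_one₀ hr0.le hr1.le

theorem div_mem_annulus {r : ℝ} (hr0 : 0 < r) (hr1 : r < 1) {z₀ z : ℂ} (hz₀ : z₀ ∈ annulus r 1)
    (hz : z ∈ annulus r 1) : z₀ / z ∈ annulus (r ^ 2) (r ^ 2)⁻¹ := by
  have hz0 : 0 < ‖z‖ := hr0.trans hz.1
  have hr2 : r ^ 2 ≤ r := pow_le_of_le_one hr0.le hr1.le two_ne_zero
  rw [mem_annulus, norm_div]
  constructor
  · exact hr2.trans_lt (hz₀.1.trans_le (le_div_self (norm_nonneg _) hz0 hz.2.le))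
  · calc ‖z₀‖ / ‖z‖ < 1 / ‖z‖ := div_lt_div_of_pos_right hz₀.2 hz0
      _ < r⁻¹ := by rw [one_div]; exact inv_strictAnti₀ hr0 hz.1
      _ ≤ (r ^ 2)⁻¹ := inv_anti₀ (by positivity) hr2

noncomputable def pfunReg (r : ℝ) (z₀ z : ℂ) : ℂ :=
  z * logDeriv (theta1 r) (starRingEnd ℂ z₀ * z) - logDeriv (theta1Reg r) (z₀ / z) / z

theorem differentiableOn_pfunReg {r : ℝ} (hr0 : 0 < r) (hr1 : r < 1) {z₀ : ℂ}
    (hz₀ : z₀ ∈ annulus r 1) : DifferentiableOn ℂ (pfunReg r z₀) (annulus r 1) := by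
  intro z hz
  have hA := isOpen_annulus (r ^ 2) (r ^ 2)⁻¹
  obtain ⟨hconj, hconj1⟩ := conj_mul_mem_annulus_and_ne_one hr0 hr1 hz₀ hz
  have hdiv := div_mem_annulus hr0 hr1 hz₀ hz
  have hθ := (differentiableOn_theta1 hr0 hr1).differentiableAt_logDeriv hA hconj
    (theta1_ne_zero hr0 hr1 hconj hconj1)
  have hH := (differentiableOn_theta1Reg hr0 hr1).differentiableAt_logDeriv hA hdiv
    (theta1Reg_ne_zero hr0 hr1 hdiv)
  have hz0 := ne_zero_of_mem_annulus hr0.le hz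
  refine DifferentiableAt.differentiableWithinAt ?_
  exact (differentiableAt_id.mul (hθ.comp z (by fun_prop))).sub
    ((hH.comp z (by fun_prop (disch := exact hz0))).div differentiableAt_id hz0)

theorem pfun_eq_inv_sub_add_pfunReg {r : ℝ} (hr0 : 0 < r) (hr1 : r < 1) {z₀ z : ℂ}
    (hz₀ : z₀ ∈ annulus r 1) (hz : z ∈ annulus r 1) (hzz₀ : z ≠ z₀) :
    pfun r z₀ z = (z - z₀)⁻¹ + pfunReg r z₀ z := by
  have hz0 := ne_zero_of_mem_annulus hr0.le hz
  have hdiv1 : z₀ / z ≠ 1 := fun h => hzz₀ ((div_eq_one_iff_eq hz0).1 h).symm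
  have hpfun : pfun r z₀ z =
      z * logDeriv (theta1 r) (starRingEnd ℂ z₀ * z) - logDeriv (theta1 r) (z₀ / z) / z := by
    rw [pfun, logDeriv_apply, logDeriv_apply, mul_div_assoc, div_mul_eq_div_div_swap]
  rw [hpfun, logDeriv_theta1 hr0 hr1 (div_mem_annulus hr0 hr1 hz₀ hz) hdiv1, pfunReg]
  have : z - z₀ ≠ 0 := sub_ne_zero.2 hzz₀
  field_simp
  ring

theorem stmt15_general (r : ℝ) (hr0 : 0 < r) (hr1 : r < 1)
    (z₀ : ℂ) (hz₀l : r < ‖z₀‖) (hz₀u : ‖z₀‖ < 1) :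
    DifferentiableOn ℂ (pfun r z₀) ({z : ℂ | r < ‖z‖ ∧ ‖z‖ < 1} \ {z₀}) ∧
    ∃ ε > 0, ∃ g : ℂ → ℂ, DifferentiableOn ℂ g (Metric.ball z₀ ε) ∧
      ∀ z ∈ Metric.ball z₀ ε \ {z₀}, pfun r z₀ z = (z - z₀)⁻¹ + g z := by
  have hz₀ : z₀ ∈ annulus r 1 := ⟨hz₀l, hz₀u⟩
  have hreg := differentiableOn_pfunReg hr0 hr1 hz₀
  have hpfun : ∀ z ∈ annulus r 1 \ {z₀}, pfun r z₀ z = (z - z₀)⁻¹ + pfunReg r z₀ z :=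
    fun z hz => pfun_eq_inv_sub_add_pfunReg hr0 hr1 hz₀ hz.1 hz.2
  obtain ⟨ε, hε, hball⟩ := Metric.isOpen_iff.1 (isOpen_annulus r 1) z₀ hz₀
  refine ⟨?_, ε, hε, pfunReg r z₀, hreg.mono hball,
    fun z hz => hpfun z ⟨hball hz.1, hz.2⟩⟩
  refine DifferentiableOn.congr ?_ hpfun
  exact ((differentiableOn_id.sub_const z₀).inv fun z hz => sub_ne_zero.2 hz.2).add
    (hreg.mono sdiff_subset)

theorem stmt15 (r : ℝ) (hr0 : 0 < r) (hr1 : r < 1)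
    (z₀ : ℂ) (hz₀l : r < ‖z₀‖) (hz₀u : ‖z₀‖ < 1)
    -- `|z₀|²` is not of the form `r^{2m}`, so the first term is holomorphic on the annulus
    (hgen : ∀ m : ℤ, (‖z₀‖ ^ 2 : ℝ) ≠ r ^ (2 * m)) :
    DifferentiableOn ℂ (pfun r z₀) ({z : ℂ | r < ‖z‖ ∧ ‖z‖ < 1} \ {z₀}) ∧
    ∃ ε > 0, ∃ g : ℂ → ℂ, DifferentiableOn ℂ g (Metric.ball z₀ ε) ∧
      ∀ z ∈ Metric.ball z₀ ε \ {z₀}, pfun r z₀ z = (z - z₀)⁻¹ + g z :=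
  stmt15_general r hr0 hr1 z₀ hz₀l hz₀u
end

section
/- Let G(z) = 2/z and F(z) = −2z on the punctured unit disk 𝔻* = {0 < |z| < 1}. Then |F'(z)| < |G'(z)| for all z ∈ 𝔻*, and the map ψ = ((1/2)(G + conj(F)), (1/8)(|G|² − |F|² + 2 Re(GF)) − (1/2)Re ∫ F dG) parametrizes a surface in ℝ³ whose first two coordinates ψ₀(z) = 1/z − conj(z) define a diffeomorphism from 𝔻* onto ℂ \ {0} ≅ ℝ² \ {(0,0)}. -/
open Set Complex

/-- Inverse of `z ↦ 1/z - conj z`. -/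
noncomputable def gfun (w : ℂ) : ℂ :=
  (((Real.sqrt (‖w‖ ^ 2 + 4) - ‖w‖) / (2 * ‖w‖) : ℝ) : ℂ) * (starRingEnd ℂ) w

lemma key_r (ρ : ℝ) (hρ : 0 < ρ) :
    0 < (Real.sqrt (ρ ^ 2 + 4) - ρ) / 2 ∧ (Real.sqrt (ρ ^ 2 + 4) - ρ) / 2 < 1 ∧
      ((Real.sqrt (ρ ^ 2 + 4) - ρ) / 2) ^ 2 + ρ * ((Real.sqrt (ρ ^ 2 + 4) - ρ) / 2) = 1 := by
  have h0 : (0:ℝ) ≤ ρ ^ 2 + 4 := by positivity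
  have hs : Real.sqrt (ρ ^ 2 + 4) ^ 2 = ρ ^ 2 + 4 := Real.sq_sqrt h0
  have hsn : 0 ≤ Real.sqrt (ρ ^ 2 + 4) := Real.sqrt_nonneg _
  have h1 : ρ < Real.sqrt (ρ ^ 2 + 4) := by nlinarith
  refine ⟨by linarith, ?_, by nlinarith⟩
  nlinarith

lemma gfun_spec (w : ℂ) (hw : w ≠ 0) :
    0 < ‖gfun w‖ ∧ ‖gfun w‖ < 1 ∧
      1 / gfun w - (starRingEnd ℂ) (gfun w) = w := by
  set ρ := ‖w‖ with hρdef
  have hρ : 0 < ρ := norm_pos_iff.mpr hw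
  obtain ⟨hr0, hr1, hkey⟩ := key_r ρ hρ
  set r := (Real.sqrt (ρ ^ 2 + 4) - ρ) / 2 with hrdef
  have htdef : (Real.sqrt (ρ ^ 2 + 4) - ρ) / (2 * ρ) = r / ρ := by
    rw [hrdef]; ring
  have hg : gfun w = ((r / ρ : ℝ) : ℂ) * (starRingEnd ℂ) w := by
    rw [gfun, ← hρdef, htdef]
  have hnorm : ‖gfun w‖ = r := by
    rw [hg, norm_mul, Complex.norm_real, RCLike.norm_conj, ← hρdef,
      Real.norm_eq_abs, abs_of_pos (by positivity), div_mul_cancel₀ _ (ne_of_gt hρ)]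
  refine ⟨by rw [hnorm]; exact hr0, by rw [hnorm]; exact hr1, ?_⟩
  have hg0 : gfun w ≠ 0 := by
    intro h; rw [h, norm_zero] at hnorm; exact absurd hnorm.symm (ne_of_gt hr0)
  have hconj : (starRingEnd ℂ) (gfun w) = ((r / ρ : ℝ) : ℂ) * w := by
    rw [hg, map_mul, Complex.conj_ofReal, Complex.conj_conj]
  have hmul : w * (starRingEnd ℂ) w = ((ρ ^ 2 : ℝ) : ℂ) := by
    rw [Complex.mul_conj']; norm_cast
  apply mul_right_cancel₀ hg0
  rw [sub_mul, one_div_mul_cancel hg0, hconj, hg]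
  rw [show ((r / ρ : ℝ) : ℂ) * w * (((r / ρ : ℝ) : ℂ) * (starRingEnd ℂ) w)
      = ((r / ρ : ℝ) : ℂ) * ((r / ρ : ℝ) : ℂ) * (w * (starRingEnd ℂ) w) by ring,
    show w * (((r / ρ : ℝ) : ℂ) * (starRingEnd ℂ) w)
      = ((r / ρ : ℝ) : ℂ) * (w * (starRingEnd ℂ) w) by ring, hmul]
  push_cast
  have ht : r / ρ * ρ = r := div_mul_cancel₀ r (ne_of_gt hρ)
  have hreal : (1:ℝ) - (r/ρ) * (r/ρ) * ρ^2 = (r/ρ) * ρ^2 := by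
    rw [show (r/ρ) * (r/ρ) * ρ^2 = (r/ρ*ρ) * (r/ρ*ρ) by ring,
      show (r/ρ) * ρ^2 = (r/ρ*ρ) * ρ by ring, ht]
    nlinarith
  exact_mod_cast hreal

lemma f_eq (z : ℂ) (h0 : 0 < ‖z‖) :
    1 / z - (starRingEnd ℂ) z = (((1 - ‖z‖ ^ 2) / ‖z‖ ^ 2 : ℝ) : ℂ) * (starRingEnd ℂ) z := by
  have hz : z ≠ 0 := norm_pos_iff.mp h0
  have hmul : z * (starRingEnd ℂ) z = ((‖z‖ ^ 2 : ℝ) : ℂ) := by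
    rw [Complex.mul_conj']; norm_cast
  have hs : ((‖z‖ ^ 2 : ℝ) : ℂ) ≠ 0 := by
    norm_cast; positivity
  apply mul_right_cancel₀ hz
  rw [sub_mul, one_div_mul_cancel hz,
    show (((1 - ‖z‖ ^ 2) / ‖z‖ ^ 2 : ℝ) : ℂ) * (starRingEnd ℂ) z * z
      = (((1 - ‖z‖ ^ 2) / ‖z‖ ^ 2 : ℝ) : ℂ) * (z * (starRingEnd ℂ) z) by ring,
    show (starRingEnd ℂ) z * z = z * (starRingEnd ℂ) z by ring, hmul,
    ← Complex.ofReal_mul, div_mul_cancel₀ _ (pow_ne_zero 2 (ne_of_gt h0))]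
  push_cast
  ring

lemma gfun_left (z : ℂ) (h0 : 0 < ‖z‖) (h1 : ‖z‖ < 1) :
    gfun (1 / z - (starRingEnd ℂ) z) = z := by
  set s := ‖z‖ with hsdef
  set c : ℝ := (1 - s ^ 2) / s ^ 2 with hcdef
  have hc : 0 < c := by
    apply div_pos; nlinarith; positivity
  have hw : 1 / z - (starRingEnd ℂ) z = ((c : ℝ) : ℂ) * (starRingEnd ℂ) z := f_eq z h0
  set w := 1 / z - (starRingEnd ℂ) z with hwdef
  have hρ : ‖w‖ = c * s := by
    rw [hw, norm_mul, Complex.norm_real, RCLike.norm_conj, Real.norm_eq_abs,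
      abs_of_pos hc, ← hsdef]
  have hρ0 : 0 < c * s := mul_pos hc h0
  obtain ⟨hr0, hr1, hkey⟩ := key_r (c * s) hρ0
  set r := (Real.sqrt ((c * s) ^ 2 + 4) - (c * s)) / 2 with hrdef
  -- s also satisfies the quadratic:
  have hcs : c * s ^ 2 = 1 - s ^ 2 := by
    rw [hcdef]; field_simp
  have hsq : s ^ 2 + (c * s) * s = 1 := by nlinarith
  have hrs : r = s := by nlinarith
  have htdef : (Real.sqrt ((c*s) ^ 2 + 4) - (c*s)) / (2 * (c*s)) = r / (c*s) := by
    rw [hrdef]; exact (div_div _ 2 (c*s)).symm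
  have hg : gfun w = ((r / (c * s) : ℝ) : ℂ) * (starRingEnd ℂ) w := by
    rw [gfun, hρ, htdef]
  have hconjw : (starRingEnd ℂ) w = ((c : ℝ) : ℂ) * z := by
    rw [hw, map_mul, Complex.conj_ofReal, Complex.conj_conj]
  rw [hg, hconjw, ← mul_assoc, ← Complex.ofReal_mul, hrs,
    show s / (c * s) * c = 1 by field_simp, Complex.ofReal_one, one_mul]

lemma f_ne_zero (z : ℂ) (h0 : 0 < ‖z‖) (h1 : ‖z‖ < 1) :
    1 / z - (starRingEnd ℂ) z ≠ 0 := by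
  rw [f_eq z h0]
  have hz : z ≠ 0 := norm_pos_iff.mp h0
  apply mul_ne_zero
  · norm_cast
    exact div_ne_zero (by nlinarith) (pow_ne_zero 2 (ne_of_gt h0))
  · simpa using hz

lemma gfun_smooth : ContDiffOn ℝ (⊤ : ℕ∞) gfun {w : ℂ | w ≠ 0} := by
  intro w hw
  have hw' : w ≠ 0 := hw
  apply ContDiffAt.contDiffWithinAt
  have hn : ContDiffAt ℝ (⊤ : ℕ∞) (fun w : ℂ => ‖w‖) w := contDiffAt_norm ℝ hw'
  have hn2 : ContDiffAt ℝ (⊤ : ℕ∞) (fun w : ℂ => ‖w‖ ^ 2 + 4) w := (hn.pow 2).add contDiffAt_const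
  have hsq : ContDiffAt ℝ (⊤ : ℕ∞) (fun w : ℂ => Real.sqrt (‖w‖ ^ 2 + 4)) w :=
    (Real.contDiffAt_sqrt (by positivity : ‖w‖ ^ 2 + 4 ≠ 0)).comp w hn2
  have hden : ContDiffAt ℝ (⊤ : ℕ∞) (fun w : ℂ => 2 * ‖w‖) w := contDiffAt_const.mul hn
  have hq : ContDiffAt ℝ (⊤ : ℕ∞)
      (fun w : ℂ => (Real.sqrt (‖w‖ ^ 2 + 4) - ‖w‖) / (2 * ‖w‖)) w :=
    (hsq.sub hn).div hden (mul_ne_zero two_ne_zero (ne_of_gt (norm_pos_iff.mpr hw')))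
  have hcast : ContDiffAt ℝ (⊤ : ℕ∞)
      (fun w : ℂ => (((Real.sqrt (‖w‖ ^ 2 + 4) - ‖w‖) / (2 * ‖w‖) : ℝ) : ℂ)) w :=
    Complex.ofRealCLM.contDiff.contDiffAt.comp w hq
  exact hcast.mul (Complex.conjCLE.contDiff.contDiffAt)

lemma f_smooth : ContDiffOn ℝ (⊤ : ℕ∞) (fun z : ℂ => 1 / z - (starRingEnd ℂ) z)
    {z : ℂ | 0 < ‖z‖ ∧ ‖z‖ < 1} := by
  intro z hz
  have hz' : z ≠ 0 := norm_pos_iff.mp hz.1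
  apply ContDiffAt.contDiffWithinAt
  have h1 : ContDiffAt ℝ (⊤ : ℕ∞) (fun w : ℂ => 1 / w) z := by
    simpa [one_div] using ((contDiffAt_inv ℂ hz').restrict_scalars ℝ)
  exact h1.sub (Complex.conjCLE.contDiff.contDiffAt)

theorem stmt17 :
    -- (i) `|F'| < |G'|` on the punctured unit disk, for `F(z) = −2z`, `G(z) = 2/z`
    (∀ z : ℂ, 0 < ‖z‖ → ‖z‖ < 1 →
      ‖deriv (fun w : ℂ => -2 * w) z‖ < ‖deriv (fun w : ℂ => 2 / w) z‖) ∧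
    -- (ii) `ψ₀(z) = 1/z − z̄` is a diffeomorphism from `𝔻*` onto `ℂ \ {0}`
    Set.BijOn (fun z : ℂ => 1 / z - (starRingEnd ℂ) z)
      {z : ℂ | 0 < ‖z‖ ∧ ‖z‖ < 1} {w : ℂ | w ≠ 0} ∧
    ContDiffOn ℝ (⊤ : ℕ∞) (fun z : ℂ => 1 / z - (starRingEnd ℂ) z)
      {z : ℂ | 0 < ‖z‖ ∧ ‖z‖ < 1} ∧
    ∃ g : ℂ → ℂ, ContDiffOn ℝ (⊤ : ℕ∞) g {w : ℂ | w ≠ 0} ∧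
      (∀ z ∈ ({z : ℂ | 0 < ‖z‖ ∧ ‖z‖ < 1} : Set ℂ),
        g (1 / z - (starRingEnd ℂ) z) = z) ∧
      ∀ w : ℂ, w ≠ 0 →
        g w ∈ ({z : ℂ | 0 < ‖z‖ ∧ ‖z‖ < 1} : Set ℂ) ∧
        1 / g w - (starRingEnd ℂ) (g w) = w := by
  refine ⟨?_, ?_, f_smooth, gfun, gfun_smooth, fun z hz => gfun_left z hz.1 hz.2,
    fun w hw => ⟨⟨(gfun_spec w hw).1, (gfun_spec w hw).2.1⟩, (gfun_spec w hw).2.2⟩⟩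
  · intro z h0 h1
    have hz : z ≠ 0 := norm_pos_iff.mp h0
    have hd1 : deriv (fun w : ℂ => -2 * w) z = -2 := by
      have := deriv_const_mul_field (v := fun w : ℂ => w) (x := z) (-2)
      simpa [deriv_id'] using this
    have hd2 : deriv (fun w : ℂ => 2 / w) z = 2 * (-(z ^ 2)⁻¹) := by
      simp only [div_eq_mul_inv]
      rw [deriv_const_mul_field, deriv_inv]
    rw [hd1, hd2]
    have hz2 : (0:ℝ) < ‖z‖ ^ 2 := by positivity
    have : ‖(2 : ℂ) * (-(z ^ 2)⁻¹)‖ = 2 / ‖z‖ ^ 2 := by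
      rw [norm_mul, norm_neg, norm_inv, norm_pow]
      simp [div_eq_mul_inv]
    rw [this]
    have h2 : ‖(-2 : ℂ)‖ = 2 := by simp
    rw [h2]
    rw [lt_div_iff₀ hz2]
    nlinarith
  · have hmf : Set.MapsTo (fun z : ℂ => 1 / z - (starRingEnd ℂ) z)
        {z : ℂ | 0 < ‖z‖ ∧ ‖z‖ < 1} {w : ℂ | w ≠ 0} :=
      fun z hz => f_ne_zero z hz.1 hz.2
    have hmg : Set.MapsTo gfun {w : ℂ | w ≠ 0} {z : ℂ | 0 < ‖z‖ ∧ ‖z‖ < 1} :=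
      fun w hw => ⟨(gfun_spec w hw).1, (gfun_spec w hw).2.1⟩
    have hinv : Set.InvOn gfun (fun z : ℂ => 1 / z - (starRingEnd ℂ) z)
        {z : ℂ | 0 < ‖z‖ ∧ ‖z‖ < 1} {w : ℂ | w ≠ 0} :=
      ⟨fun z hz => gfun_left z hz.1 hz.2, fun w hw => (gfun_spec w hw).2.2⟩
    exact hinv.bijOn hmf hmg
end
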